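/- arXiv:1509.01747 — 7 statements merged into one kernel-verified Lean document; each statement's English description precedes it below -/
import Mathlib

section
/- Let G be a simple graph with a part assignment P, such that every vertex of G is incident with at most one cross edge. If p is a path in G from u to v whose part trace has length t with t ≥ 2 (in particular P(u) ≠ P(v)), then p has at least 2t−3 edges. (This is Lemma 1: a general route of order t between server-nodes lying in different top-level substructures of a completely connected recursively-defined network has hop-length at least 2t−3.) -/
/-!
Walking along a path, every change of part is a cross edge. If such a cross edge `u w` is
followed by another edge `w x`, then `x ≠ u` because a path does not revisit `u`, so `w x` is
not the unique cross edge at `w`: it stays inside the part of `w`. Hence every part of the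
trace other than the first and the last contributes at least one edge inside it, besides the
`t - 1` cross edges, giving `(t - 1) + (t - 2)` edges in total.
-/

namespace SimpleGraph.Walk

variable {V I : Type*} [DecidableEq I] {G : SimpleGraph V} (P : V → I)

def partTrace {u v : V} (p : G.Walk u v) : List I :=
  (p.support.map P).destutter (· ≠ ·)

lemma partTrace_nil {u : V} : (nil : G.Walk u u).partTrace P = [P u] :=
  List.destutter_singleton _

lemma partTrace_cons {u w v : V} (h : G.Adj u w) (q : G.Walk w v) :
    (cons h q).partTrace P = if P u = P w then q.partTrace P else P u :: q.partTrace P := by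
  obtain ⟨rest, hrest⟩ : ∃ rest, q.support.map P = P w :: rest :=
    ⟨_, by rw [← q.cons_tail_support, List.map_cons]⟩
  simp only [partTrace, support_cons, List.map_cons, hrest, List.destutter_cons']
  split_ifs with huw
  · rw [List.destutter'_cons_neg _ (not_not.mpr huw), huw]
  · rw [List.destutter'_cons_pos _ huw]

variable {P}

lemma part_eq_part_getVert_one_of_cross {u w v : V}
    (hcross : ∀ v : V, {w : V | G.Adj v w ∧ P v ≠ P w}.Subsingleton)
    (h : G.Adj u w) (q : G.Walk w v) (hp : (cons h q).IsPath) (huw : P u ≠ P w) :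
    P w = P (q.getVert 1) := by
  cases q with
  | nil => rfl
  | @cons _ x _ h' q' =>
    rw [getVert_cons_succ, getVert_zero]
    by_contra hwx
    have hux : u = x := hcross w ⟨h.symm, Ne.symm huw⟩ ⟨h', hwx⟩
    have hu : u ∉ (cons h' q').support := ((cons_isPath_iff h _).mp hp).2
    exact hu (by simp [hux])

/-- A path that starts with an edge inside a part saves one edge: its first part also contains
an edge. This is the strengthening that makes the induction go through. -/
theorem two_mul_length_partTrace_le
    (hcross : ∀ v : V, {w : V | G.Adj v w ∧ P v ≠ P w}.Subsingleton) {u v : V}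
    (p : G.Walk u v) (hp : p.IsPath) :
    2 * (p.partTrace P).length ≤ p.length + 3 ∧
      (P u = P (p.getVert 1) → 2 * (p.partTrace P).length ≤ p.length + 2) := by
  induction p with
  | nil => simp [partTrace_nil]
  | @cons u w v h q ih =>
    obtain ⟨ihq, ihq_inside⟩ := ih hp.of_cons
    rw [partTrace_cons, length_cons, getVert_cons_succ, getVert_zero]
    by_cases huw : P u = P w
    · rw [if_pos huw]
      exact ⟨by omega, fun _ => by omega⟩
    · rw [if_neg huw, List.length_cons]
      have hq := ihq_inside (part_eq_part_getVert_one_of_cross hcross h q hp huw)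
      exact ⟨by omega, fun h' => absurd h' huw⟩

end SimpleGraph.Walk

open SimpleGraph Walk

theorem general_route_order_t_length_general {V I : Type*} [DecidableEq I]
    (G : SimpleGraph V) (P : V → I)
    (hcross : ∀ v : V, {w : V | G.Adj v w ∧ P v ≠ P w}.Subsingleton)
    {u v : V} (p : G.Walk u v) (hp : p.IsPath) (t : ℕ)
    (htrace : ((p.support.map P).destutter (· ≠ ·)).length = t) :
    2 * t - 3 ≤ p.length := by
  have hbound := (two_mul_length_partTrace_le hcross p hp).1
  rw [partTrace, htrace] at hbound
  omega

/-- **Lemma 1.** In a simple graph `G` with a part assignment `P` such that every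
vertex is incident with at most one cross edge (an edge whose endpoints lie in
different parts), any path `p` from `u` to `v` whose part trace (the sequence of
parts of consecutive vertices with runs of equal entries collapsed) has length
`t ≥ 2` has at least `2 * t - 3` edges. -/
theorem general_route_order_t_length {V I : Type*} [DecidableEq I]
    (G : SimpleGraph V) (P : V → I)
    (hcross : ∀ v : V, {w : V | G.Adj v w ∧ P v ≠ P w}.Subsingleton)
    {u v : V} (p : G.Walk u v) (hp : p.IsPath) (t : ℕ) (ht : 2 ≤ t)
    (htrace : ((p.support.map P).destutter (· ≠ ·)).length = t) :
    2 * t - 3 ≤ p.length :=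
  general_route_order_t_length_general G P hcross p hp t htrace
end

section
/- Let (V, P, μ) be a cross matching in which every part has exactly N ≥ 1 elements, and let A and B be two distinct parts. Then the set of pairs (s, d) with P(s) = A, P(d) = B, and P(μ(s)) = P(μ(d)) ∉ {A, B} (i.e., s and d are matched into a common proxy part) has cardinality at most N. Consequently, since a 3-hop proxy route from s to d requires s and d to be matched into a common proxy part, for a pair (s,d) chosen uniformly at random from the N² pairs in A × B, the probability that there is a 3-hop proxy route from s to d is at most 1/N. (This is Lemma A.2: in a Generalized DCell(k,n), the probability that a random source–destination pair in distinct copies of DCell(k−1,n) admits a 3-hop proxy route is at most 1/t_{k−1}.) -/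
/-!
A proxy pair `(s, d)` is determined by `s`: its proxy part `C = P (μ s)` differs from `B`, and a
cross matching has exactly one element of `B` matched into `C`, which must be `d`. So the proxy
pairs inject into the part `A` by the first projection, giving at most `N` of them among the
`N ^ 2` pairs of `A × B`.
-/

namespace CrossMatching

variable {V I : Type*}

def proxyPairs [Fintype V] [DecidableEq I] (P : V → I) (μ : V → V) (A B : I) : Finset (V × V) :=
  Finset.univ.filter fun sd : V × V =>
    P sd.1 = A ∧ P sd.2 = B ∧ P (μ sd.1) = P (μ sd.2) ∧ P (μ sd.1) ≠ A ∧ P (μ sd.1) ≠ B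

theorem eq_of_mem_part_of_matched_into_same_part {P : V → I} {μ : V → V}
    (huniq : ∀ A B : I, A ≠ B → ∃! v : V, P v = A ∧ P (μ v) = B)
    {B : I} {d d' : V} (hd : P d = B) (hd' : P d' = B) (hne : P (μ d) ≠ B)
    (hμ : P (μ d) = P (μ d')) : d = d' :=
  (huniq B (P (μ d)) hne.symm).unique ⟨hd, rfl⟩ ⟨hd', hμ.symm⟩

theorem card_proxyPairs_le_card_part [Fintype V] [DecidableEq I] {P : V → I} {μ : V → V}
    (huniq : ∀ A B : I, A ≠ B → ∃! v : V, P v = A ∧ P (μ v) = B) (A B : I) :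
    (proxyPairs P μ A B).card ≤ (Finset.univ.filter fun v => P v = A).card := by
  refine Finset.card_le_card_of_injOn Prod.fst (fun sd hsd => ?_) fun sd hsd sd' hsd' hfst => ?_
  · simp only [proxyPairs, Finset.mem_coe, Finset.mem_filter, Finset.mem_univ, true_and] at hsd ⊢
    exact hsd.1
  · simp only [proxyPairs, Finset.mem_coe, Finset.mem_filter, Finset.mem_univ, true_and]
      at hsd hsd'
    obtain ⟨-, hd, hμ, -, hne⟩ := hsd
    obtain ⟨-, hd', hμ', -, -⟩ := hsd'
    refine Prod.ext hfst (eq_of_mem_part_of_matched_into_same_part huniq hd hd' ?_ ?_)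
    · rwa [← hμ]
    · rw [← hμ, ← hμ', hfst]

end CrossMatching

theorem div_sq_le_one_div_of_le {K : Type*} [Field K] [LinearOrder K] [IsStrictOrderedRing K]
    {x N : K} (h : x ≤ N) : x / N ^ 2 ≤ 1 / N := by
  calc x / N ^ 2 ≤ N / (N * N) := by rw [sq]; gcongr; exact mul_self_nonneg N
    _ = 1 / N := by rw [div_self_mul_self', one_div]

open CrossMatching in
theorem cross_matching_proxy_pairs_le_general {V I : Type*} [Fintype V] [DecidableEq I]
    (P : V → I) (N : ℕ)
    (hfib : ∀ i : I, (Finset.univ.filter fun v => P v = i).card = N)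
    (μ : V → V)
    (huniq : ∀ A B : I, A ≠ B → ∃! v : V, P v = A ∧ P (μ v) = B)
    (A B : I) :
    (Finset.univ.filter fun sd : V × V =>
        P sd.1 = A ∧ P sd.2 = B ∧ P (μ sd.1) = P (μ sd.2) ∧
        P (μ sd.1) ≠ A ∧ P (μ sd.1) ≠ B).card ≤ N ∧
    ((Finset.univ.filter fun sd : V × V =>
        P sd.1 = A ∧ P sd.2 = B ∧ P (μ sd.1) = P (μ sd.2) ∧
        P (μ sd.1) ≠ A ∧ P (μ sd.1) ≠ B).card : ℚ) / (N ^ 2 : ℚ) ≤ 1 / (N : ℚ) := by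
  have hcard : (proxyPairs P μ A B).card ≤ N :=
    hfib A ▸ card_proxyPairs_le_card_part huniq A B
  exact ⟨hcard, div_sq_le_one_div_of_le (by exact_mod_cast hcard)⟩

/-- **Lemma A.2.** Let `(V, P, μ)` be a cross matching in which every part has
exactly `N ≥ 1` elements, and let `A ≠ B` be parts.  The set of pairs `(s, d)`
with `P s = A`, `P d = B` and `s, d` matched into a common proxy part (one
distinct from `A` and `B`) has cardinality at most `N`; hence for a uniformly
random pair in `A × B` the probability of a 3-hop proxy route is at most `1/N`. -/
theorem cross_matching_proxy_pairs_le {V I : Type*} [Fintype V] [DecidableEq I]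
    (P : V → I) (hsurj : Function.Surjective P) (N : ℕ) (hN : 1 ≤ N)
    (hfib : ∀ i : I, (Finset.univ.filter fun v => P v = i).card = N)
    (μ : V → V) (hinv : Function.Involutive μ) (hfix : ∀ v, μ v ≠ v)
    (hcross : ∀ v, P (μ v) ≠ P v)
    (huniq : ∀ A B : I, A ≠ B → ∃! v : V, P v = A ∧ P (μ v) = B)
    (A B : I) (hAB : A ≠ B) :
    (Finset.univ.filter fun sd : V × V =>
        P sd.1 = A ∧ P sd.2 = B ∧ P (μ sd.1) = P (μ sd.2) ∧
        P (μ sd.1) ≠ A ∧ P (μ sd.1) ≠ B).card ≤ N ∧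
    ((Finset.univ.filter fun sd : V × V =>
        P sd.1 = A ∧ P sd.2 = B ∧ P (μ sd.1) = P (μ sd.2) ∧
        P (μ sd.1) ≠ A ∧ P (μ sd.1) ≠ B).card : ℚ) / (N ^ 2 : ℚ) ≤ 1 / (N : ℚ) :=
  cross_matching_proxy_pairs_le_general P N hfib μ huniq A B
end

section
/- Let (V, P, μ) be a cross matching in which every part has exactly N ≥ 1 elements, and let A and B be two distinct parts. Then for every s with P(s) = A, there is at most one d with P(d) = B such that P(μ(s)) = P(μ(d)) ∉ {A, B}, and there is exactly one such d if and only if P(μ(s)) ≠ B. Consequently the set of pairs (s, d) ∈ A × B with P(μ(s)) = P(μ(d)) ∉ {A, B} has cardinality exactly N − 1. -/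
/-!
Fix `s` in part `A` and let `C = P (μ s)`, so `C ≠ A`. A partner `d` of `s` is an element of `B`
with `P (μ d) = C`; when `C ≠ B`, the cross-matching axiom for the ordered pair `(B, C)` says there
is exactly one. So the partnered `s` are the elements of `A` not matched into `B`, and by the same
axiom for `(A, B)` exactly one element of `A` is matched into `B`, which leaves `N - 1` of them.
-/

namespace CrossMatching

open Finset

variable {V I : Type*} (P : V → I) (μ : V → V)

abbrev IsProxyPartner (A B : I) (s d : V) : Prop :=
  P d = B ∧ P (μ s) = P (μ d) ∧ P (μ s) ≠ A ∧ P (μ s) ≠ B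

variable {P μ}

theorem IsProxyPartner.eq
    (huniq : ∀ A B : I, A ≠ B → ∃! v : V, P v = A ∧ P (μ v) = B)
    {A B : I} {s d d' : V} (hd : IsProxyPartner P μ A B s d) (hd' : IsProxyPartner P μ A B s d') :
    d = d' :=
  (huniq B (P (μ s)) (Ne.symm hd.2.2.2)).unique ⟨hd.1, hd.2.1.symm⟩ ⟨hd'.1, hd'.2.1.symm⟩

theorem exists_isProxyPartner (hcross : ∀ v, P (μ v) ≠ P v)
    (huniq : ∀ A B : I, A ≠ B → ∃! v : V, P v = A ∧ P (μ v) = B)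
    {A B : I} {s : V} (hs : P s = A) (hB : P (μ s) ≠ B) :
    ∃ d, IsProxyPartner P μ A B s d := by
  obtain ⟨d, ⟨hdB, hdC⟩, -⟩ := huniq B (P (μ s)) (Ne.symm hB)
  exact ⟨d, hdB, hdC.symm, hs ▸ hcross s, hB⟩

theorem existsUnique_isProxyPartner_iff (hcross : ∀ v, P (μ v) ≠ P v)
    (huniq : ∀ A B : I, A ≠ B → ∃! v : V, P v = A ∧ P (μ v) = B)
    {A B : I} {s : V} (hs : P s = A) :
    (∃! d, IsProxyPartner P μ A B s d) ↔ P (μ s) ≠ B :=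
  ⟨fun ⟨_, hd, _⟩ => hd.2.2.2, fun hB =>
    existsUnique_of_exists_of_unique (exists_isProxyPartner hcross huniq hs hB)
      fun _ _ => IsProxyPartner.eq huniq⟩

theorem card_part_matched_ne [Fintype V] [DecidableEq I]
    (huniq : ∀ A B : I, A ≠ B → ∃! v : V, P v = A ∧ P (μ v) = B) {A B : I} (hAB : A ≠ B) :
    #{s | P s = A ∧ P (μ s) ≠ B} = #{s | P s = A} - 1 := by
  have hone : #{s | P s = A ∧ P (μ s) = B} = 1 :=
    (Fintype.existsUnique_iff_card_one _).mp (huniq A B hAB)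
  have hsplit := card_filter_add_card_filter_not (s := {s | P s = A}) (fun s => P (μ s) = B)
  rw [filter_filter, filter_filter, hone] at hsplit
  exact Nat.eq_sub_of_add_eq' hsplit

theorem card_proxyPairs [Fintype V] [DecidableEq I] (hcross : ∀ v, P (μ v) ≠ P v)
    (huniq : ∀ A B : I, A ≠ B → ∃! v : V, P v = A ∧ P (μ v) = B) (A B : I) :
    #{sd : V × V | P sd.1 = A ∧ IsProxyPartner P μ A B sd.1 sd.2} =
      #{s | P s = A ∧ P (μ s) ≠ B} := by
  apply card_nbij Prod.fst
  · rintro ⟨s, d⟩ h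
    simp only [coe_filter, mem_univ, true_and, Set.mem_ofPred_eq] at h ⊢
    exact ⟨h.1, h.2.2.2.2⟩
  · rintro ⟨s, d⟩ h ⟨s', d'⟩ h' (rfl : s = s')
    simp only [coe_filter, mem_univ, true_and, Set.mem_ofPred_eq] at h h'
    rw [IsProxyPartner.eq huniq h.2 h'.2]
  · intro s hs
    simp only [coe_filter, mem_univ, true_and, Set.mem_ofPred_eq] at hs
    obtain ⟨hs, hB⟩ := hs
    obtain ⟨d, hd⟩ := exists_isProxyPartner hcross huniq hs hB
    exact ⟨(s, d), by simpa using ⟨hs, hd⟩, rfl⟩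

end CrossMatching

open CrossMatching in
theorem cross_matching_proxy_pairs_count_general {V I : Type*} [Fintype V] [DecidableEq I]
    (P : V → I) (N : ℕ)
    (hfib : ∀ i : I, (Finset.univ.filter fun v => P v = i).card = N)
    (μ : V → V)
    (hcross : ∀ v, P (μ v) ≠ P v)
    (huniq : ∀ A B : I, A ≠ B → ∃! v : V, P v = A ∧ P (μ v) = B)
    (A B : I) (hAB : A ≠ B) :
    (∀ s : V, P s = A →
      ({d : V | P d = B ∧ P (μ s) = P (μ d) ∧ P (μ s) ≠ A ∧ P (μ s) ≠ B}).Subsingleton ∧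
      ((∃! d : V, P d = B ∧ P (μ s) = P (μ d) ∧ P (μ s) ≠ A ∧ P (μ s) ≠ B) ↔
        P (μ s) ≠ B)) ∧
    (Finset.univ.filter fun sd : V × V =>
        P sd.1 = A ∧ P sd.2 = B ∧ P (μ sd.1) = P (μ sd.2) ∧
        P (μ sd.1) ≠ A ∧ P (μ sd.1) ≠ B).card = N - 1 := by
  refine ⟨fun s hs => ⟨fun _ hd _ hd' => IsProxyPartner.eq huniq hd hd',
    existsUnique_isProxyPartner_iff hcross huniq hs⟩, ?_⟩
  rw [← hfib A, ← card_part_matched_ne huniq hAB, ← card_proxyPairs hcross huniq A B]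

/-- Let `(V, P, μ)` be a cross matching in which every part has exactly `N ≥ 1`
elements, and let `A ≠ B` be parts.  For every `s` with `P s = A` there is at
most one `d` with `P d = B` matched into the same proxy part (distinct from `A`
and `B`) as `s`, and exactly one such `d` exists iff `P (μ s) ≠ B`.  Hence the
set of such pairs `(s, d)` has cardinality exactly `N - 1`. -/
theorem cross_matching_proxy_pairs_count {V I : Type*} [Fintype V] [DecidableEq I]
    (P : V → I) (hsurj : Function.Surjective P) (N : ℕ) (hN : 1 ≤ N)
    (hfib : ∀ i : I, (Finset.univ.filter fun v => P v = i).card = N)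
    (μ : V → V) (hinv : Function.Involutive μ) (hfix : ∀ v, μ v ≠ v)
    (hcross : ∀ v, P (μ v) ≠ P v)
    (huniq : ∀ A B : I, A ≠ B → ∃! v : V, P v = A ∧ P (μ v) = B)
    (A B : I) (hAB : A ≠ B) :
    (∀ s : V, P s = A →
      ({d : V | P d = B ∧ P (μ s) = P (μ d) ∧ P (μ s) ≠ A ∧ P (μ s) ≠ B}).Subsingleton ∧
      ((∃! d : V, P d = B ∧ P (μ s) = P (μ d) ∧ P (μ s) ≠ A ∧ P (μ s) ≠ B) ↔
        P (μ s) ≠ B)) ∧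
    (Finset.univ.filter fun sd : V × V =>
        P sd.1 = A ∧ P sd.2 = B ∧ P (μ sd.1) = P (μ sd.2) ∧
        P (μ sd.1) ≠ A ∧ P (μ sd.1) ≠ B).card = N - 1 :=
  cross_matching_proxy_pairs_count_general P N hfib μ hcross huniq A B hAB
end

section
/- Let n ≥ 4 be an even integer and define the sequence of rationals t_0 = n and t_k = t_{k−1}·(t_{k−1}/2^k + 1) for k ≥ 1. Then for every k ≥ 0, t_k is a positive integer divisible by 2^{k+1}. In particular, for every k ≥ 1 the quantity g_k = t_{k−1}/2^k + 1 is a positive integer, so the FiConn construction, which builds FiConn(k,n) from g_k copies of FiConn(k−1,n), is well-defined at every level. -/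
/-! Writing `t k = 2 ^ (k + 1) * q k`, the recurrence becomes `q (k + 1) = q k * (q k + 1) / 2`,
the binomial coefficient `(q k + 1).choose 2`. Hence `q` stays a positive natural number,
starting from `q 0 = n / 2`. -/

theorem div_two_pow_succ_of_recurrence (t : ℕ → ℚ)
    (hrec : ∀ k : ℕ, t (k + 1) = t k * (t k / 2 ^ (k + 1) + 1)) (k : ℕ) :
    t (k + 1) / 2 ^ (k + 2) = t k / 2 ^ (k + 1) * (t k / 2 ^ (k + 1) + 1) / 2 := by
  rw [hrec k]
  ring

theorem cast_choose_two_succ (c : ℕ) : (((c + 1).choose 2 : ℕ) : ℚ) = c * (c + 1) / 2 := by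
  rw [Nat.cast_choose_two]
  push_cast
  ring

theorem exists_pos_nat_eq_div_two_pow (t : ℕ → ℚ) (c₀ : ℕ) (hc₀ : 0 < c₀) (h0 : t 0 = 2 * c₀)
    (hrec : ∀ k : ℕ, t (k + 1) = t k * (t k / 2 ^ (k + 1) + 1)) (k : ℕ) :
    ∃ c : ℕ, 0 < c ∧ t k / 2 ^ (k + 1) = c := by
  induction k with
  | zero => exact ⟨c₀, hc₀, by rw [h0]; ring⟩
  | succ k ih =>
    obtain ⟨c, hc, htc⟩ := ih
    refine ⟨(c + 1).choose 2, Nat.choose_pos (by omega), ?_⟩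
    rw [div_two_pow_succ_of_recurrence t hrec, htc, cast_choose_two_succ]

/-- Let `n ≥ 4` be even and define the rationals `t 0 = n`,
`t k = t (k-1) * (t (k-1) / 2^k + 1)` for `k ≥ 1`.  Then every `t k` is a
positive integer divisible by `2^(k+1)`; in particular every
`g k = t (k-1) / 2^k + 1` (`k ≥ 1`) is a positive integer, so the FiConn
construction is well-defined at every level. -/
theorem ficonn_well_defined (n : ℕ) (hn : 4 ≤ n) (hev : Even n)
    (t : ℕ → ℚ) (h0 : t 0 = n)
    (hrec : ∀ k : ℕ, t (k + 1) = t k * (t k / 2 ^ (k + 1) + 1)) :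
    (∀ k : ℕ, ∃ m : ℕ, 0 < m ∧ 2 ^ (k + 1) ∣ m ∧ t k = (m : ℚ)) ∧
    (∀ k : ℕ, ∃ g : ℕ, 0 < g ∧ t k / 2 ^ (k + 1) + 1 = (g : ℚ)) := by
  obtain ⟨c₀, rfl⟩ := hev
  have hq := exists_pos_nat_eq_div_two_pow t c₀ (by omega) (by rw [h0]; push_cast; ring) hrec
  refine ⟨fun k => ?_, fun k => ?_⟩
  · obtain ⟨c, hc, htc⟩ := hq k
    refine ⟨2 ^ (k + 1) * c, by positivity, dvd_mul_right _ _, ?_⟩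
    rw [div_eq_iff (by positivity)] at htc
    rw [htc]
    push_cast
    ring
  · obtain ⟨c, -, htc⟩ := hq k
    exact ⟨c + 1, c.succ_pos, by rw [htc]; push_cast; rfl⟩
end

section
/- Let n ≥ 4 be an even integer and define integer sequences by a_0 = t_0 = n and, for k ≥ 1, g_k = a_{k−1}/2 + 1, t_k = g_k·t_{k−1}, and a_k = g_k·a_{k−1} − g_k·(g_k − 1). Then these recurrences are well-defined over the integers (every a_k is a positive even integer) and a_k·2^k = t_k for every k ≥ 0; equivalently, g_k = t_{k−1}/2^k + 1 for every k ≥ 1. (This is the identity b/2 + 1 = t_{k−1}/2^k + 1 used in the definition of FiConn, where b = a_{k−1} is the number of available server-nodes of FiConn(k−1,n).) -/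
/-! If `b = 2m` is even, then `g = b/2 + 1 = m + 1` and `g b - g (g - 1) = (m + 1) m`, which is
again positive and even and equals `g b / 2`. Thus `2 a_k = g_k a_{k-1}` mirrors `t_k = g_k t_{k-1}`
up to the factor 2, whence `a_k 2^k = t_k`, and `a_{k-1} / 2 = a_{k-1} 2^{k-1} / 2^k = t_{k-1} / 2^k`. -/

namespace FiConn

theorem available_step_eq {b : ℤ} (hb : Even b) :
    (b / 2 + 1) * b - (b / 2 + 1) * (b / 2 + 1 - 1) = (b / 2 + 1) * (b / 2) := by
  obtain ⟨m, rfl⟩ := hb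
  rw [← two_mul, Int.mul_ediv_cancel_left m two_ne_zero]
  ring

theorem available_step_pos_even {b : ℤ} (hb : 0 < b) (hb2 : Even b) :
    0 < (b / 2 + 1) * b - (b / 2 + 1) * (b / 2 + 1 - 1) ∧
      Even ((b / 2 + 1) * b - (b / 2 + 1) * (b / 2 + 1 - 1)) := by
  rw [available_step_eq hb2]
  have hhalf : 0 < b / 2 := by obtain ⟨m, rfl⟩ := hb2; omega
  exact ⟨by positivity, by rw [mul_comm]; exact Int.even_mul_succ_self _⟩

theorem available_step_mul_two {b : ℤ} (hb : Even b) :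
    ((b / 2 + 1) * b - (b / 2 + 1) * (b / 2 + 1 - 1)) * 2 = (b / 2 + 1) * b := by
  rw [available_step_eq hb, mul_assoc, Int.ediv_mul_cancel (even_iff_two_dvd.mp hb)]

variable {a g t : ℕ → ℤ}

theorem available_pos_even (h0 : 0 < a 0) (he0 : Even (a 0))
    (hg : ∀ k, g (k + 1) = a k / 2 + 1)
    (ha : ∀ k, a (k + 1) = g (k + 1) * a k - g (k + 1) * (g (k + 1) - 1)) (k : ℕ) :
    0 < a k ∧ Even (a k) := by
  induction k with
  | zero => exact ⟨h0, he0⟩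
  | succ k ih => rw [ha, hg]; exact available_step_pos_even ih.1 ih.2

theorem available_mul_two_pow (h0 : a 0 = t 0) (heven : ∀ k, Even (a k))
    (hg : ∀ k, g (k + 1) = a k / 2 + 1)
    (ha : ∀ k, a (k + 1) = g (k + 1) * a k - g (k + 1) * (g (k + 1) - 1))
    (ht : ∀ k, t (k + 1) = g (k + 1) * t k) (k : ℕ) :
    a k * 2 ^ k = t k := by
  induction k with
  | zero => simpa using h0
  | succ k ih =>
    calc a (k + 1) * 2 ^ (k + 1) = (a (k + 1) * 2) * 2 ^ k := by ring
      _ = g (k + 1) * (a k * 2 ^ k) := by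
        rw [ha, hg, available_step_mul_two (heven k)]; ring
      _ = t (k + 1) := by rw [ih, ht]

end FiConn

open FiConn in
/-- Let `n ≥ 4` be even and define integer sequences `a 0 = t 0 = n` and, for
`k ≥ 1`, `g k = a (k-1) / 2 + 1`, `t k = g k * t (k-1)`, and
`a k = g k * a (k-1) - g k * (g k - 1)`.  Then every `a k` is a positive even
integer (so the recurrences are well-defined over the integers), and
`a k * 2^k = t k` for every `k`; equivalently `g k = t (k-1) / 2^k + 1` for
every `k ≥ 1`. -/
theorem ficonn_available_nodes (n : ℤ) (hn : 4 ≤ n) (hev : Even n)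
    (a g t : ℕ → ℤ) (ha0 : a 0 = n) (ht0 : t 0 = n)
    (hg : ∀ k : ℕ, 1 ≤ k → g k = a (k - 1) / 2 + 1)
    (ht : ∀ k : ℕ, 1 ≤ k → t k = g k * t (k - 1))
    (ha : ∀ k : ℕ, 1 ≤ k → a k = g k * a (k - 1) - g k * (g k - 1)) :
    (∀ k : ℕ, 0 < a k ∧ Even (a k)) ∧
    (∀ k : ℕ, a k * 2 ^ k = t k) ∧
    (∀ k : ℕ, 1 ≤ k → g k = t (k - 1) / 2 ^ k + 1) := by
  have hg' (k : ℕ) : g (k + 1) = a k / 2 + 1 := hg (k + 1) k.succ_pos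
  have ht' (k : ℕ) : t (k + 1) = g (k + 1) * t k := ht (k + 1) k.succ_pos
  have ha' (k : ℕ) : a (k + 1) = g (k + 1) * a k - g (k + 1) * (g (k + 1) - 1) :=
    ha (k + 1) k.succ_pos
  have hpos := available_pos_even (by omega) (ha0 ▸ hev) hg' ha'
  have hpow := available_mul_two_pow (ha0.trans ht0.symm) (fun k => (hpos k).2) hg' ha' ht'
  refine ⟨hpos, hpow, fun k hk => ?_⟩
  obtain ⟨j, rfl⟩ := Nat.exists_eq_add_of_le' hk
  rw [Nat.add_sub_cancel, hg', ← hpow, pow_succ',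
    Int.mul_ediv_mul_of_pos_left _ _ (by positivity : (0 : ℤ) < 2 ^ j)]
end

section
/- Let n ≥ 3 be an integer and define t_0 = n and t_k = t_{k−1}·(t_{k−1} + 1) for k ≥ 1. Then for every k ≥ 0, n^(2^k) ≤ t_k ≤ (n+1)^(2^k) − 1. In particular the number of server-nodes of DCell(k,n) grows double-exponentially in k. -/
/-! Both bounds come from comparing the recursion with squaring: `t k ^ 2 ≤ t (k + 1)` and
`t (k + 1) + 1 ≤ (t k + 1) ^ 2`, and iterating `x ↦ x ^ 2` on `x₀` for `k` steps gives
`x₀ ^ 2 ^ k`. -/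

section IteratedSquaring

variable {R : Type*} [CommSemiring R] [PartialOrder R] [IsOrderedRing R] {u : ℕ → R}

theorem pow_two_pow_le_of_sq_le (h0 : 0 ≤ u 0) (h : ∀ k, u k ^ 2 ≤ u (k + 1)) (k : ℕ) :
    u 0 ^ 2 ^ k ≤ u k := by
  induction k with
  | zero => simp
  | succ k ih =>
    calc u 0 ^ 2 ^ (k + 1) = (u 0 ^ 2 ^ k) ^ 2 := by rw [pow_succ 2, pow_mul]
      _ ≤ u k ^ 2 := pow_le_pow_left₀ (pow_nonneg h0 _) ih 2
      _ ≤ u (k + 1) := h k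

theorem le_pow_two_pow_of_le_sq (hnonneg : ∀ k, 0 ≤ u k) (h : ∀ k, u (k + 1) ≤ u k ^ 2)
    (k : ℕ) : u k ≤ u 0 ^ 2 ^ k := by
  induction k with
  | zero => simp
  | succ k ih =>
    calc u (k + 1) ≤ u k ^ 2 := h k
      _ ≤ (u 0 ^ 2 ^ k) ^ 2 := pow_le_pow_left₀ (hnonneg k) ih 2
      _ = u 0 ^ 2 ^ (k + 1) := by rw [pow_succ 2, pow_mul]

end IteratedSquaring

theorem dcell_double_exponential_general (n : ℕ)
    (t : ℕ → ℕ) (h0 : t 0 = n) (hrec : ∀ k : ℕ, t (k + 1) = t k * (t k + 1)) :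
    ∀ k : ℕ, n ^ 2 ^ k ≤ t k ∧ t k ≤ (n + 1) ^ 2 ^ k - 1 := by
  have hsq_le : ∀ k, t k ^ 2 ≤ t (k + 1) := fun k => by
    rw [hrec, sq]
    exact Nat.mul_le_mul_left _ (Nat.le_succ _)
  have hsucc_le : ∀ k, t (k + 1) + 1 ≤ (t k + 1) ^ 2 := fun k => by
    rw [hrec]
    nlinarith
  intro k
  have hlower := pow_two_pow_le_of_sq_le (Nat.zero_le _) hsq_le k
  have hupper := le_pow_two_pow_of_le_sq (u := fun k => t k + 1) (fun _ => Nat.zero_le _)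
    hsucc_le k
  rw [h0] at hlower hupper
  exact ⟨hlower, Nat.le_sub_one_of_lt hupper⟩

/-- Let `n ≥ 3` and define `t 0 = n`, `t (k+1) = t k * (t k + 1)`.  Then for
every `k`, `n ^ (2^k) ≤ t k ≤ (n+1) ^ (2^k) - 1`: the number of server-nodes
of DCell(k,n) grows double-exponentially in `k`. -/
theorem dcell_double_exponential (n : ℕ) (hn : 3 ≤ n)
    (t : ℕ → ℕ) (h0 : t 0 = n) (hrec : ∀ k : ℕ, t (k + 1) = t k * (t k + 1)) :
    ∀ k : ℕ, n ^ 2 ^ k ≤ t k ∧ t k ≤ (n + 1) ^ 2 ^ k - 1 :=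
  dcell_double_exponential_general n t h0 hrec
end

section
/- In the server-to-server adjacency graph of DCell(k,n) defined by the level-i connection rules (k ≥ 1, n > 2), every server-node lies on exactly one level-i link for each i ∈ {1, …, k}. Consequently, counting also the single link joining each server-node to the switch of its DCell(0,n), every server-node of DCell(k,n) has degree exactly k + 1, and the total number of links of DCell(k,n) is t_k·(k+2)/2. -/
/-- The weight of coordinate `i` in the uid of a DCell label: `1` for `i = 0`
and `t (i-1)` for `i ≥ 1`. -/
def dcellWeight (t : ℕ → ℕ) (i : ℕ) : ℕ := if i = 0 then 1 else t (i - 1)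

/-- `uid_{i-1}(x_{i-1}, …, x_0)`: the uid of the part of the label `x` strictly
below coordinate `i`. -/
def dcellUidBelow (t : ℕ → ℕ) (k : ℕ) (i : Fin (k + 1)) (x : Fin (k + 1) → ℕ) : ℕ :=
  ∑ j ∈ Finset.univ.filter (fun j : Fin (k + 1) => j < i), x j * dcellWeight t (j : ℕ)

/-- Valid server-node labels of DCell(k,n): `x 0 < n` and `x i ≤ t (i-1)` for
`i ≥ 1`. -/
def dcellValid (t : ℕ → ℕ) (n k : ℕ) (x : Fin (k + 1) → ℕ) : Prop :=
  x 0 < n ∧ ∀ i : Fin (k + 1), 0 < (i : ℕ) → x i ≤ t ((i : ℕ) - 1)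

/-- Labels `x` and `y` are joined by a level-`i` link: all coordinates above
`i` agree, the copy indices at `i` differ, and (with `x i < y i` w.l.o.g.)
`uid_{i-1}(x) = y i - 1` and `uid_{i-1}(y) = x i`. -/
def dcellLevelLink (t : ℕ → ℕ) (k : ℕ) (i : Fin (k + 1))
    (x y : Fin (k + 1) → ℕ) : Prop :=
  (∀ j : Fin (k + 1), i < j → x j = y j) ∧ x i ≠ y i ∧
    ((x i < y i ∧ dcellUidBelow t k i x = y i - 1 ∧ dcellUidBelow t k i y = x i) ∨
     (y i < x i ∧ dcellUidBelow t k i y = x i - 1 ∧ dcellUidBelow t k i x = y i))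


/-!
A valid label is a mixed-radix numeral with bases `n, t₀ + 1, …, t_{k-1} + 1`; since
`t_i = t_{i-1} (t_{i-1} + 1)`, the place values are `1, t₀, …, t_{k-1}`, which are exactly the
weights of the uid. Hence `uid_{i-1}` is a bijection from the lower parts of valid labels onto
`[0, t_{i-1})`. The level-`i` rule determines the copy index and the lower uid of the partner of
`x` from `x_i` and `uid_{i-1}(x)`, both within range, so the partner exists and is unique.
Partners at different levels `i < i'` differ in coordinate `i'`, so a node has `k` distinct
neighbours; the ordered server pairs number `t_k · k`, and the switch links add `2 t_k`.
-/

open Finset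

namespace MixedRadix

variable (b : ℕ → ℕ)

def placeValue (j : ℕ) : ℕ := ∏ l ∈ range j, b l

def value (x : ℕ → ℕ) (m : ℕ) : ℕ := ∑ j ∈ range m, x j * placeValue b j

def digit (v j : ℕ) : ℕ := v / placeValue b j % b j

variable {b}

theorem placeValue_succ (j : ℕ) : placeValue b (j + 1) = placeValue b j * b j :=
  prod_range_succ _ _

theorem value_succ (x : ℕ → ℕ) (m : ℕ) :
    value b x (m + 1) = value b x m + x m * placeValue b m :=
  sum_range_succ _ _

theorem value_congr {x y : ℕ → ℕ} {m : ℕ} (h : ∀ j < m, x j = y j) :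
    value b x m = value b y m :=
  sum_congr rfl fun j hj => by rw [h j (mem_range.1 hj)]

theorem value_lt {x : ℕ → ℕ} {m : ℕ} (hx : ∀ j < m, x j < b j) :
    value b x m < placeValue b m := by
  induction m with
  | zero => simp [value, placeValue]
  | succ m ih =>
    have hlow := ih fun j hj => hx j (by omega)
    rw [value_succ, placeValue_succ]
    calc value b x m + x m * placeValue b m
        < (x m + 1) * placeValue b m := by rw [add_one_mul]; omega
      _ ≤ placeValue b m * b m := by rw [mul_comm]; gcongr; exact hx m (by omega)

theorem eq_of_value_eq {x y : ℕ → ℕ} {m : ℕ} (hx : ∀ j < m, x j < b j)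
    (hy : ∀ j < m, y j < b j) (h : value b x m = value b y m) :
    ∀ j < m, x j = y j := by
  induction m with
  | zero => simp
  | succ m ih =>
    have hx' : ∀ j < m, x j < b j := fun j hj => hx j (by omega)
    have hy' : ∀ j < m, y j < b j := fun j hj => hy j (by omega)
    have hxm := value_lt hx'
    have hym := value_lt hy'
    have hpos : 0 < placeValue b m := by omega
    rw [value_succ, value_succ] at h
    have htop : x m = y m := by
      have := congrArg (· / placeValue b m) h
      simpa [Nat.add_mul_div_right _ _ hpos, Nat.div_eq_of_lt hxm, Nat.div_eq_of_lt hym]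
        using this
    have hlow : value b x m = value b y m := by rw [htop] at h; omega
    intro j hj
    rcases Nat.lt_succ_iff_lt_or_eq.mp hj with hj | rfl
    · exact ih hx' hy' hlow j hj
    · exact htop

theorem mod_placeValue (v m : ℕ) : v % placeValue b m = value b (digit b v) m := by
  induction m with
  | zero => simp [value, placeValue, Nat.mod_one]
  | succ m ih => rw [placeValue_succ, Nat.mod_mul, value_succ, ← ih, digit, mul_comm]

theorem value_digit {v m : ℕ} (hv : v < placeValue b m) : value b (digit b v) m = v := by
  rw [← mod_placeValue, Nat.mod_eq_of_lt hv]

theorem digit_lt {j : ℕ} (hb : 0 < b j) (v : ℕ) : digit b v j < b j :=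
  Nat.mod_lt _ hb

theorem value_eq_iff {x : ℕ → ℕ} {m v : ℕ} (hx : ∀ j < m, x j < b j) :
    value b x m = v ↔ v < placeValue b m ∧ ∀ j < m, x j = digit b v j := by
  constructor
  · rintro rfl
    have hv := value_lt hx
    refine ⟨hv, eq_of_value_eq hx (fun j hj => digit_lt (by have := hx j hj; omega) _) ?_⟩
    rw [value_digit hv]
  · rintro ⟨hv, hdigits⟩
    rw [value_congr hdigits, value_digit hv]

end MixedRadix

namespace DCell

open MixedRadix (placeValue)

def labelDigits {k : ℕ} (x : Fin (k + 1) → ℕ) (m : ℕ) : ℕ :=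
  if h : m < k + 1 then x ⟨m, h⟩ else 0

theorem labelDigits_of_lt {k m : ℕ} (x : Fin (k + 1) → ℕ) (hm : m < k + 1) :
    labelDigits x m = x ⟨m, hm⟩ :=
  dif_pos hm

@[simp]
theorem labelDigits_val {k : ℕ} (x : Fin (k + 1) → ℕ) (j : Fin (k + 1)) :
    labelDigits x j = x j :=
  labelDigits_of_lt x j.isLt

def base (t : ℕ → ℕ) (n j : ℕ) : ℕ := if j = 0 then n else t (j - 1) + 1

variable {t : ℕ → ℕ} {n k : ℕ}

theorem base_pos (hn : 0 < n) (j : ℕ) : 0 < base t n j := by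
  unfold base; split_ifs <;> omega

theorem base_of_ne_zero {j : ℕ} (hj : j ≠ 0) : base t n j = dcellWeight t j + 1 := by
  simp [base, dcellWeight, hj]

theorem dcellValid_iff {x : Fin (k + 1) → ℕ} :
    dcellValid t n k x ↔ ∀ j : Fin (k + 1), x j < base t n j := by
  refine ⟨fun ⟨h0, hpos⟩ j => ?_, fun h => ⟨by simpa [base] using h 0, fun j hj => ?_⟩⟩
  · rcases Nat.eq_zero_or_pos j with hj | hj
    · obtain rfl : j = 0 := Fin.ext hj
      simpa [base] using h0
    · have := hpos j hj
      simp only [base, Nat.pos_iff_ne_zero.mp hj, if_false]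
      omega
  · have := h j
    simp only [base, Nat.pos_iff_ne_zero.mp hj, if_false] at this
    omega

theorem labelDigits_lt_base {x : Fin (k + 1) → ℕ} (hx : dcellValid t n k x) {m : ℕ}
    (hm : m < k + 1) : labelDigits x m < base t n m := by
  simpa [labelDigits_of_lt x hm] using dcellValid_iff.mp hx ⟨m, hm⟩

/- Solving the level-`i` rule for the partner of a node with copy index `a` and lower uid `u`:
its copy index and lower uid are `(u + 1, a)` if `a ≤ u`, and `(u, a - 1)` if `u < a`. -/

def partnerCopy (a u : ℕ) : ℕ := if a ≤ u then u + 1 else u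

def partnerUid (a u : ℕ) : ℕ := if a ≤ u then a else a - 1

theorem partnerCopy_le {a u W : ℕ} (hu : u < W) : partnerCopy a u ≤ W := by
  unfold partnerCopy; split_ifs <;> omega

theorem partnerUid_lt {a u W : ℕ} (ha : a ≤ W) (hu : u < W) : partnerUid a u < W := by
  unfold partnerUid; split_ifs <;> omega

theorem partnerCopy_ne (a u : ℕ) : partnerCopy a u ≠ a := by
  unfold partnerCopy; split_ifs <;> omega

theorem link_condition_iff {a u b v : ℕ} :
    (a ≠ b ∧ ((a < b ∧ u = b - 1 ∧ v = a) ∨ (b < a ∧ v = a - 1 ∧ u = b))) ↔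
      b = partnerCopy a u ∧ v = partnerUid a u := by
  unfold partnerCopy partnerUid; split_ifs <;> omega

theorem dcellLevelLink_iff {i : Fin (k + 1)} {x y : Fin (k + 1) → ℕ} :
    dcellLevelLink t k i x y ↔ (∀ j, i < j → x j = y j) ∧
      y i = partnerCopy (x i) (dcellUidBelow t k i x) ∧
      dcellUidBelow t k i y = partnerUid (x i) (dcellUidBelow t k i x) :=
  and_congr_right' link_condition_iff

def partner (t : ℕ → ℕ) (n : ℕ) (x : Fin (k + 1) → ℕ) (i : Fin (k + 1)) :
    Fin (k + 1) → ℕ := fun j =>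
  if j < i then MixedRadix.digit (base t n) (partnerUid (x i) (dcellUidBelow t k i x)) j
  else if j = i then partnerCopy (x i) (dcellUidBelow t k i x) else x j

theorem eq_partner_iff {i : Fin (k + 1)} {x y : Fin (k + 1) → ℕ} :
    y = partner t n x i ↔ (∀ j, i < j → x j = y j) ∧
      y i = partnerCopy (x i) (dcellUidBelow t k i x) ∧
      ∀ j < i, y j = MixedRadix.digit (base t n) (partnerUid (x i) (dcellUidBelow t k i x)) j := by
  constructor
  · rintro rfl
    refine ⟨fun j hj => ?_, by simp [partner], fun j hj => by simp [partner, hj]⟩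
    simp [partner, hj.not_gt, hj.ne']
  · rintro ⟨habove, hi, hbelow⟩
    funext j
    rcases lt_trichotomy j i with hj | rfl | hj
    · simp [partner, hj, hbelow j hj]
    · simp [partner, hi]
    · simp [partner, hj.not_gt, hj.ne', habove j hj]

theorem partner_injective (x : Fin (k + 1) → ℕ) : Function.Injective (partner t n x) := by
  have key : ∀ i i', i < i' → partner t n x i i' ≠ partner t n x i' i' := by
    intro i i' hii'
    have hpartner i := (eq_partner_iff (t := t) (n := n) (x := x) (i := i)).mp rfl
    rw [← (hpartner i).1 i' hii', (hpartner i').2.1]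
    exact (partnerCopy_ne _ _).symm
  intro i i' h
  by_contra hne
  rcases lt_or_gt_of_ne hne with hlt | hlt
  · exact key i i' hlt (congrFun h i')
  · exact key i' i hlt (congrFun h i).symm

theorem ncard_setOf_val_pos : {i : Fin (k + 1) | 0 < (i : ℕ)}.ncard = k := by
  have : {i : Fin (k + 1) | 0 < (i : ℕ)} = Set.range Fin.succ := by
    ext i
    cases i using Fin.cases <;> simp
  rw [this, Set.ncard_range_of_injective (Fin.succ_injective _), Nat.card_eq_fintype_card,
    Fintype.card_fin]

section Recurrence

variable (h0 : t 0 = n) (hrec : ∀ i, t (i + 1) = t i * (t i + 1))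
include h0 hrec

theorem dcellWeight_eq_placeValue (j : ℕ) : dcellWeight t j = placeValue (base t n) j := by
  induction j with
  | zero => simp [dcellWeight, placeValue]
  | succ j ih =>
    rw [MixedRadix.placeValue_succ, ← ih]
    cases j with
    | zero => simp [dcellWeight, base, h0]
    | succ j => simp [dcellWeight, base, hrec]

theorem dcellUidBelow_eq (i : Fin (k + 1)) (x : Fin (k + 1) → ℕ) :
    dcellUidBelow t k i x = MixedRadix.value (base t n) (labelDigits x) i := by
  rw [dcellUidBelow, filter_gt_eq_Iio, MixedRadix.value, ← Nat.Iio_eq_range,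
    ← Fin.map_valEmbedding_Iio, sum_map]
  simp [dcellWeight_eq_placeValue h0 hrec]

theorem dcellUidBelow_eq_iff {i : Fin (k + 1)} {y : Fin (k + 1) → ℕ} (hy : dcellValid t n k y)
    {v : ℕ} : dcellUidBelow t k i y = v ↔
      v < dcellWeight t i ∧ ∀ j < i, y j = MixedRadix.digit (base t n) v j := by
  rw [dcellUidBelow_eq h0 hrec,
    MixedRadix.value_eq_iff fun m hm => labelDigits_lt_base hy (hm.trans i.isLt),
    dcellWeight_eq_placeValue h0 hrec]
  refine and_congr_right' ⟨fun h j hj => ?_, fun h m hm => ?_⟩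
  · simpa using h j hj
  · simpa [labelDigits_of_lt y (hm.trans i.isLt)] using h ⟨m, by omega⟩ hm

theorem dcellUidBelow_lt {i : Fin (k + 1)} {x : Fin (k + 1) → ℕ} (hx : dcellValid t n k x) :
    dcellUidBelow t k i x < dcellWeight t i :=
  ((dcellUidBelow_eq_iff h0 hrec hx).mp rfl).1

theorem partner_valid (hn : 0 < n) {i : Fin (k + 1)} (hi : 0 < (i : ℕ))
    {x : Fin (k + 1) → ℕ} (hx : dcellValid t n k x) : dcellValid t n k (partner t n x i) := by
  refine dcellValid_iff.mpr fun j => ?_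
  rcases lt_trichotomy j i with hj | rfl | hj
  · simpa [partner, hj] using MixedRadix.digit_lt (base_pos hn j) _
  · simpa [partner, base_of_ne_zero hi.ne', Nat.lt_succ_iff] using
      partnerCopy_le (a := x j) (dcellUidBelow_lt h0 hrec hx)
  · simpa [partner, hj.not_gt, hj.ne'] using dcellValid_iff.mp hx j

theorem dcellLevelLink_iff_eq_partner {i : Fin (k + 1)} (hi : 0 < (i : ℕ))
    {x y : Fin (k + 1) → ℕ} (hx : dcellValid t n k x) (hy : dcellValid t n k y) :
    dcellLevelLink t k i x y ↔ y = partner t n x i := by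
  have hxi : x i ≤ dcellWeight t i := by
    have := dcellValid_iff.mp hx i
    rw [base_of_ne_zero hi.ne'] at this
    omega
  rw [dcellLevelLink_iff, dcellUidBelow_eq_iff h0 hrec hy, eq_partner_iff]
  exact and_congr_right' <| and_congr_right' <|
    and_iff_right (partnerUid_lt hxi (dcellUidBelow_lt h0 hrec hx))

theorem ncard_setOf_dcellValid (hn : 0 < n) : {x | dcellValid t n k x}.ncard = t k := by
  have htk : t k = placeValue (base t n) (k + 1) := by
    simpa [dcellWeight] using dcellWeight_eq_placeValue h0 hrec (k + 1)
  rw [htk, ← card_range (placeValue (base t n) (k + 1)), ← Set.ncard_coe_finset]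
  refine Set.ncard_congr (fun x _ => MixedRadix.value (base t n) (labelDigits x) (k + 1))
    (fun x hx => ?_) (fun x y hx hy hxy => ?_) (fun v hv => ?_)
  · exact mem_range.mpr (MixedRadix.value_lt fun m hm => labelDigits_lt_base hx hm)
  · funext j
    simpa using MixedRadix.eq_of_value_eq (fun m hm => labelDigits_lt_base hx hm)
      (fun m hm => labelDigits_lt_base hy hm) hxy j j.isLt
  · refine ⟨fun j => MixedRadix.digit (base t n) v j,
      dcellValid_iff.mpr fun j => MixedRadix.digit_lt (base_pos hn j) v, ?_⟩
    rw [MixedRadix.value_congr fun m hm => labelDigits_of_lt _ hm,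
      MixedRadix.value_digit (mem_range.mp hv)]

variable (hn : 0 < n)
include hn

theorem dcellValid_and_dcellLevelLink_iff {x y : Fin (k + 1) → ℕ} (hx : dcellValid t n k x)
    {i : Fin (k + 1)} (hi : 0 < (i : ℕ)) :
    dcellValid t n k y ∧ dcellLevelLink t k i x y ↔ y = partner t n x i := by
  refine ⟨fun ⟨hy, hlink⟩ => (dcellLevelLink_iff_eq_partner h0 hrec hi hx hy).mp hlink, ?_⟩
  rintro rfl
  exact ⟨partner_valid h0 hrec hn hi hx,
    (dcellLevelLink_iff_eq_partner h0 hrec hi hx (partner_valid h0 hrec hn hi hx)).mpr rfl⟩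

theorem setOf_dcellLevelLink_eq_image {x : Fin (k + 1) → ℕ} (hx : dcellValid t n k x) :
    {y | dcellValid t n k y ∧ ∃ i : Fin (k + 1), 0 < (i : ℕ) ∧ dcellLevelLink t k i x y} =
      partner t n x '' {i | 0 < (i : ℕ)} := by
  ext y
  constructor
  · rintro ⟨hy, i, hi, hlink⟩
    exact ⟨i, hi, ((dcellValid_and_dcellLevelLink_iff h0 hrec hn hx hi).mp ⟨hy, hlink⟩).symm⟩
  · rintro ⟨i, hi, rfl⟩
    obtain ⟨hy, hlink⟩ := (dcellValid_and_dcellLevelLink_iff h0 hrec hn hx hi).mpr rfl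
    exact ⟨hy, i, hi, hlink⟩

theorem setOf_dcellLevelLink_pairs_eq_image :
    {p : (Fin (k + 1) → ℕ) × (Fin (k + 1) → ℕ) | dcellValid t n k p.1 ∧ dcellValid t n k p.2 ∧
        ∃ i : Fin (k + 1), 0 < (i : ℕ) ∧ dcellLevelLink t k i p.1 p.2} =
      (fun q => (q.1, partner t n q.1 q.2)) ''
        ({x | dcellValid t n k x} ×ˢ {i : Fin (k + 1) | 0 < (i : ℕ)}) := by
  ext ⟨x, y⟩
  constructor
  · rintro ⟨hx : dcellValid t n k x, hy, i, hi, hlink⟩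
    obtain rfl := (dcellValid_and_dcellLevelLink_iff h0 hrec hn hx hi).mp ⟨hy, hlink⟩
    exact ⟨(x, i), ⟨hx, hi⟩, rfl⟩
  · rintro ⟨⟨x, i⟩, ⟨hx, hi⟩, hxy⟩
    cases hxy
    obtain ⟨hy, hlink⟩ := (dcellValid_and_dcellLevelLink_iff h0 hrec hn hx hi).mpr rfl
    exact ⟨hx, hy, i, hi, hlink⟩

end Recurrence

end DCell

open DCell

theorem dcell_degree_and_link_count_general (n k : ℕ) (hn : 3 ≤ n)
    (t : ℕ → ℕ) (h0 : t 0 = n) (hrec : ∀ i : ℕ, t (i + 1) = t i * (t i + 1)) :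
    (∀ x : Fin (k + 1) → ℕ, dcellValid t n k x → ∀ i : Fin (k + 1), 0 < (i : ℕ) →
      ∃! y : Fin (k + 1) → ℕ, dcellValid t n k y ∧ dcellLevelLink t k i x y) ∧
    (∀ x : Fin (k + 1) → ℕ, dcellValid t n k x →
      {y : Fin (k + 1) → ℕ | dcellValid t n k y ∧
        ∃ i : Fin (k + 1), 0 < (i : ℕ) ∧ dcellLevelLink t k i x y}.ncard + 1
        = k + 1) ∧
    {p : (Fin (k + 1) → ℕ) × (Fin (k + 1) → ℕ) |
        dcellValid t n k p.1 ∧ dcellValid t n k p.2 ∧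
        ∃ i : Fin (k + 1), 0 < (i : ℕ) ∧ dcellLevelLink t k i p.1 p.2}.ncard
      + 2 * t k = t k * (k + 2) := by
  have hn_pos : 0 < n := by omega
  have hpair_injective : Function.Injective
      (fun q : (Fin (k + 1) → ℕ) × Fin (k + 1) => (q.1, partner t n q.1 q.2)) := by
    rintro ⟨x, i⟩ ⟨x', i'⟩ h
    simp only [Prod.mk.injEq] at h
    obtain ⟨rfl, h⟩ := h
    rw [partner_injective x h]
  refine ⟨fun x hx i hi => ?_, fun x hx => ?_, ?_⟩
  · exact (existsUnique_congr fun y =>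
      dcellValid_and_dcellLevelLink_iff h0 hrec hn_pos hx hi).mpr (existsUnique_eq ..)
  · rw [setOf_dcellLevelLink_eq_image h0 hrec hn_pos hx,
      Set.ncard_image_of_injective _ (partner_injective x), ncard_setOf_val_pos]
  · rw [setOf_dcellLevelLink_pairs_eq_image h0 hrec hn_pos,
      Set.ncard_image_of_injective _ hpair_injective, Set.ncard_prod,
      ncard_setOf_dcellValid h0 hrec hn_pos, ncard_setOf_val_pos]
    ring

/-- In the server-to-server adjacency graph of DCell(k,n) (`k ≥ 1`, `n > 2`):
every server-node lies on exactly one level-`i` link for each `1 ≤ i ≤ k`;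
hence, counting also the single link to the switch of its DCell(0,n), every
server-node has degree exactly `k + 1`, and twice the total number of links of
DCell(k,n) (the ordered server-to-server adjacencies plus twice the `t k`
switch links) is `t k * (k + 2)`, i.e. there are `t k * (k+2) / 2` links. -/
theorem dcell_degree_and_link_count (n k : ℕ) (hn : 3 ≤ n) (hk : 1 ≤ k)
    (t : ℕ → ℕ) (h0 : t 0 = n) (hrec : ∀ i : ℕ, t (i + 1) = t i * (t i + 1)) :
    (∀ x : Fin (k + 1) → ℕ, dcellValid t n k x → ∀ i : Fin (k + 1), 0 < (i : ℕ) →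
      ∃! y : Fin (k + 1) → ℕ, dcellValid t n k y ∧ dcellLevelLink t k i x y) ∧
    (∀ x : Fin (k + 1) → ℕ, dcellValid t n k x →
      {y : Fin (k + 1) → ℕ | dcellValid t n k y ∧
        ∃ i : Fin (k + 1), 0 < (i : ℕ) ∧ dcellLevelLink t k i x y}.ncard + 1
        = k + 1) ∧
    {p : (Fin (k + 1) → ℕ) × (Fin (k + 1) → ℕ) |
        dcellValid t n k p.1 ∧ dcellValid t n k p.2 ∧
        ∃ i : Fin (k + 1), 0 < (i : ℕ) ∧ dcellLevelLink t k i p.1 p.2}.ncard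
      + 2 * t k = t k * (k + 2) :=
  dcell_degree_and_link_count_general n k hn t h0 hrec
end
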